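/- Let (V, ‖·‖) be a normed vector space whose closed unit ball is the closed convex hull of its extreme points. Let A ⊆ V admit a conical geodesic bicombing σ, let p₀ ∈ A, and let r ≥ 0 be such that the closed ball B(p₀, 2r) is contained in A. Then σ(p,q,t) = (1−t)p + tq for all p, q ∈ B(p₀, r) and all t ∈ [0,1]. -/

import Mathlib

/-!
Let `e` be an extreme point of the unit ball, and suppose `σ` is linear from `p` to `p + w` and
from `p + c • e` to `p + c • e + w`. By the conical inequality, the offset of
`σ p (p + c • e + w) t` from `p + t • w` splits `c • e` into two pieces of norms at most `t c` and
`(1 - t) c`. Extremality of `e` forces this split to be the linear one. Then induction on the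
number of summands shows that `σ` is linear from `p` to `p + ∑ cᵢ • eᵢ`, provided every partial
sum stays in `A`.

Every `q ∈ B(p₀, r)` is a limit of points `p + ∑ cᵢ • eᵢ` with `∑ cᵢ` slightly smaller than
`‖q - p‖`, because the ball is the closed convex hull of its extreme points. For such points, all
partial sums lie in `B(p₀, 2r) ⊆ A`. The conical inequality makes the set of endpoints reached
linearly from `p` closed, so it contains `q`.
-/

open Metric Set

section

variable {V : Type*} [NormedAddCommGroup V] [NormedSpace ℝ V]

theorem eq_smul_of_norm_le_of_norm_sub_le {e x : V}
    (he : e ∈ (closedBall (0 : V) 1).extremePoints ℝ) {t : ℝ} (ht₀ : 0 ≤ t) (ht₁ : t ≤ 1)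
    (hx : ‖x‖ ≤ t) (hex : ‖e - x‖ ≤ 1 - t) : x = t • e := by
  rcases ht₀.eq_or_lt with rfl | ht₀
  · simpa using hx
  rcases ht₁.eq_or_lt with rfl | ht₁
  · simpa [sub_eq_zero, eq_comm] using hex
  have ht₁' : 0 < 1 - t := sub_pos.2 ht₁
  have hu : t⁻¹ • x ∈ closedBall (0 : V) 1 := by
    rw [mem_closedBall_zero_iff, norm_smul_of_nonneg (inv_nonneg.2 ht₀.le), inv_mul_le_iff₀ ht₀,
      mul_one]
    exact hx
  have hv : (1 - t)⁻¹ • (e - x) ∈ closedBall (0 : V) 1 := by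
    rw [mem_closedBall_zero_iff, norm_smul_of_nonneg (inv_nonneg.2 ht₁'.le),
      inv_mul_le_iff₀ ht₁', mul_one]
    exact hex
  have hseg : e ∈ openSegment ℝ (t⁻¹ • x) ((1 - t)⁻¹ • (e - x)) :=
    ⟨t, 1 - t, ht₀, ht₁', by ring, by
      rw [smul_inv_smul₀ ht₀.ne', smul_inv_smul₀ ht₁'.ne', add_sub_cancel]⟩
  rw [← he.2 hu hv hseg, smul_inv_smul₀ ht₀.ne']

theorem eq_mul_smul_of_norm_le_of_norm_sub_le {e x : V}
    (he : e ∈ (closedBall (0 : V) 1).extremePoints ℝ) {c t : ℝ} (hc : 0 ≤ c) (ht₀ : 0 ≤ t)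
    (ht₁ : t ≤ 1) (hx : ‖x‖ ≤ t * c) (hex : ‖c • e - x‖ ≤ (1 - t) * c) : x = (t * c) • e := by
  rcases hc.eq_or_lt with rfl | hc
  · simpa using hx
  have key : c⁻¹ • x = t • e := by
    refine eq_smul_of_norm_le_of_norm_sub_le he ht₀ ht₁ ?_ ?_
    · rwa [norm_smul_of_nonneg (inv_nonneg.2 hc.le), inv_mul_le_iff₀ hc, mul_comm]
    · rwa [← inv_smul_smul₀ hc.ne' e, ← smul_sub, norm_smul_of_nonneg (inv_nonneg.2 hc.le),
        inv_mul_le_iff₀ hc, mul_comm]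
  rw [mul_comm, ← smul_smul, ← key, smul_inv_smul₀ hc.ne']

theorem norm_sum_smul_le {ι : Type*} (s : Finset ι) {c : ι → ℝ} {e : ι → V}
    (hc : ∀ i ∈ s, 0 ≤ c i) (he : ∀ i ∈ s, ‖e i‖ ≤ 1) :
    ‖∑ i ∈ s, c i • e i‖ ≤ ∑ i ∈ s, c i :=
  norm_sum_le_of_le s fun i hi => by
    rw [norm_smul_of_nonneg (hc i hi)]; exact mul_le_of_le_one_right (hc i hi) (he i hi)

theorem two_mul_dist_add_sum_le {ι : Type*} {s s' : Finset ι} (hs' : s' ⊆ s) {c : ι → ℝ}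
    {e : ι → V} (hc : ∀ i ∈ s, 0 ≤ c i) (he : ∀ i ∈ s, ‖e i‖ ≤ 1) (p o : V) :
    2 * dist (p + ∑ i ∈ s', c i • e i) o ≤
      ∑ i ∈ s, c i + dist p o + dist (p + ∑ i ∈ s, c i • e i) o := by
  classical
  have h₁ : dist (p + ∑ i ∈ s', c i • e i) o ≤ ∑ i ∈ s', c i + dist p o :=
    calc _ ≤ dist (p + ∑ i ∈ s', c i • e i) p + dist p o := dist_triangle _ _ _
      _ ≤ _ := by
        rw [dist_eq_norm, add_sub_cancel_left]
        gcongr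
        exact norm_sum_smul_le s' (fun i hi => hc i (hs' hi)) fun i hi => he i (hs' hi)
  have h₂ : dist (p + ∑ i ∈ s', c i • e i) o ≤
      ∑ i ∈ s \ s', c i + dist (p + ∑ i ∈ s, c i • e i) o :=
    calc _ ≤ dist (p + ∑ i ∈ s', c i • e i) (p + ∑ i ∈ s, c i • e i) +
          dist (p + ∑ i ∈ s, c i • e i) o := dist_triangle _ _ _
      _ ≤ _ := by
        rw [dist_comm, dist_eq_norm, add_sub_add_left_eq_sub, ← Finset.sum_sdiff_eq_sub hs']
        gcongr
        exact norm_sum_smul_le _ (fun i hi => hc i (Finset.sdiff_subset hi))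
          fun i hi => he i (Finset.sdiff_subset hi)
  have := Finset.sum_sdiff hs' (f := c)
  linarith

def IsLinearBetween (σ : V → V → ℝ → V) (p q : V) : Prop :=
  ∀ t ∈ Icc (0 : ℝ) 1, σ p q t = (1 - t) • p + t • q

variable {A : Set V} {σ : V → V → ℝ → V}

theorem isLinearBetween_self (hself : ∀ p ∈ A, ∀ t ∈ Icc (0 : ℝ) 1, σ p p t = p) {p : V}
    (hp : p ∈ A) : IsLinearBetween σ p p := fun t ht => by
  rw [hself p hp t ht]; module

theorem IsLinearBetween.add_smul_add
    (hcon : ∀ p ∈ A, ∀ q ∈ A, ∀ p' ∈ A, ∀ q' ∈ A, ∀ t ∈ Icc (0 : ℝ) 1,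
      ‖σ p q t - σ p' q' t‖ ≤ (1 - t) * ‖p - p'‖ + t * ‖q - q'‖)
    {p w e : V} {c : ℝ} (hc : 0 ≤ c) (he : e ∈ (closedBall (0 : V) 1).extremePoints ℝ)
    (hp : p ∈ A) (hpw : p + w ∈ A) (hpe : p + c • e ∈ A) (hq : p + c • e + w ∈ A)
    (h₁ : IsLinearBetween σ p (p + w)) (h₂ : IsLinearBetween σ (p + c • e) (p + c • e + w)) :
    IsLinearBetween σ p (p + c • e + w) := by
  intro t ht
  have hce : ‖c • e‖ ≤ c := by
    rw [norm_smul_of_nonneg hc]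
    exact mul_le_of_le_one_right hc (mem_closedBall_zero_iff.1 he.1)
  have hnorm_off : ‖σ p (p + c • e + w) t - (p + t • w)‖ ≤ t * c := by
    have := hcon p hp _ hq p hp _ hpw t ht
    rw [h₁ t ht, sub_self, norm_zero, mul_zero, zero_add, add_sub_add_right_eq_sub,
      add_sub_cancel_left] at this
    calc _ = ‖σ p (p + c • e + w) t - ((1 - t) • p + t • (p + w))‖ := by congr 2; module
      _ ≤ t * ‖c • e‖ := this
      _ ≤ t * c := by gcongr; exact ht.1
  have hnorm_rest : ‖c • e - (σ p (p + c • e + w) t - (p + t • w))‖ ≤ (1 - t) * c := by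
    have := hcon p hp _ hq (p + c • e) hpe _ hq t ht
    rw [h₂ t ht, sub_self, norm_zero, mul_zero, add_zero, sub_add_cancel_left, norm_neg] at this
    calc _ = ‖σ p (p + c • e + w) t - ((1 - t) • (p + c • e) + t • (p + c • e + w))‖ := by
          rw [← norm_neg]; congr 1; module
      _ ≤ (1 - t) * ‖c • e‖ := this
      _ ≤ (1 - t) * c := by gcongr; linarith [ht.2]
  have := eq_mul_smul_of_norm_le_of_norm_sub_le he hc ht.1 ht.2 hnorm_off hnorm_rest
  rw [sub_eq_iff_eq_add] at this
  rw [this]; module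

theorem isLinearBetween_add_sum (hself : ∀ p ∈ A, ∀ t ∈ Icc (0 : ℝ) 1, σ p p t = p)
    (hcon : ∀ p ∈ A, ∀ q ∈ A, ∀ p' ∈ A, ∀ q' ∈ A, ∀ t ∈ Icc (0 : ℝ) 1,
      ‖σ p q t - σ p' q' t‖ ≤ (1 - t) * ‖p - p'‖ + t * ‖q - q'‖)
    {ι : Type*} (s : Finset ι) {c : ι → ℝ} {e : ι → V} (hc : ∀ i ∈ s, 0 ≤ c i)
    (he : ∀ i ∈ s, e i ∈ (closedBall (0 : V) 1).extremePoints ℝ) (p : V)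
    (hA : ∀ s' ⊆ s, p + ∑ i ∈ s', c i • e i ∈ A) :
    IsLinearBetween σ p (p + ∑ i ∈ s, c i • e i) := by
  classical
  induction s using Finset.induction_on generalizing p with
  | empty =>
    have hp : p ∈ A := by simpa using hA ∅ subset_rfl
    simpa using isLinearBetween_self hself hp
  | insert a s ha ih =>
    have hsub : s ⊆ insert a s := Finset.subset_insert a s
    have hA' (s' : Finset ι) (hs' : s' ⊆ s) :
        p + c a • e a + ∑ i ∈ s', c i • e i ∈ A := by
      have := hA (insert a s') (Finset.insert_subset_insert a hs')
      rwa [Finset.sum_insert (fun h => ha (hs' h)), ← add_assoc] at this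
    rw [Finset.sum_insert ha, ← add_assoc]
    refine IsLinearBetween.add_smul_add hcon (hc a (s.mem_insert_self a))
      (he a (s.mem_insert_self a)) ?_ (hA s hsub) ?_ (hA' s subset_rfl)
      (ih (fun i hi => hc i (hsub hi)) (fun i hi => he i (hsub hi)) p
        fun s' hs' => hA s' (hs'.trans hsub))
      (ih (fun i hi => hc i (hsub hi)) (fun i hi => he i (hsub hi)) _ (hA' · ·))
    · simpa using hA ∅ (Finset.empty_subset _)
    · simpa using hA' ∅ (Finset.empty_subset _)

theorem isLinearBetween_of_mem_closure
    (hcon : ∀ p ∈ A, ∀ q ∈ A, ∀ p' ∈ A, ∀ q' ∈ A, ∀ t ∈ Icc (0 : ℝ) 1,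
      ‖σ p q t - σ p' q' t‖ ≤ (1 - t) * ‖p - p'‖ + t * ‖q - q'‖)
    {p q : V} (hp : p ∈ A) (hq : q ∈ A) (h : q ∈ closure {q' ∈ A | IsLinearBetween σ p q'}) :
    IsLinearBetween σ p q := by
  intro t ht
  refine eq_of_forall_dist_le fun ε hε => ?_
  obtain ⟨q', ⟨hq'A, hq'⟩, hqq'⟩ := Metric.mem_closure_iff.1 h (ε / 2) (half_pos hε)
  have hσ : dist (σ p q t) (σ p q' t) ≤ dist q q' := by
    have := hcon p hp q hq p hp q' hq'A t ht
    rw [sub_self, norm_zero, mul_zero, zero_add] at this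
    rw [dist_eq_norm, dist_eq_norm]
    exact this.trans (mul_le_of_le_one_left (norm_nonneg _) ht.2)
  have hlin : dist ((1 - t) • p + t • q') ((1 - t) • p + t • q) ≤ dist q q' := by
    rw [dist_add_left, dist_smul₀, Real.norm_eq_abs, abs_of_nonneg ht.1, dist_comm]
    exact mul_le_of_le_one_left dist_nonneg ht.2
  calc dist (σ p q t) ((1 - t) • p + t • q)
      ≤ dist (σ p q t) (σ p q' t) + dist ((1 - t) • p + t • q') ((1 - t) • p + t • q) := by
        rw [hq' t ht]; exact dist_triangle _ _ _
    _ ≤ ε := by linarith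

theorem exists_sum_smul_extremePoints_near
    (hV : closedBall (0 : V) 1 = closure (convexHull ℝ ((closedBall (0 : V) 1).extremePoints ℝ)))
    (v : V) {ε : ℝ} (hε : 0 < ε) :
    ∃ (s : Finset V) (c : V → ℝ), (∀ x ∈ s, 0 ≤ c x) ∧
      (∀ x ∈ s, x ∈ (closedBall (0 : V) 1).extremePoints ℝ) ∧
      ∑ x ∈ s, c x = ‖v‖ ∧ ‖v - ∑ x ∈ s, c x • x‖ ≤ ε * ‖v‖ := by
  rcases eq_or_ne v 0 with rfl | hv
  · exact ⟨∅, 0, by simp⟩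
  have hu : ‖v‖⁻¹ • v ∈ closure (convexHull ℝ ((closedBall (0 : V) 1).extremePoints ℝ)) := by
    rw [← hV, mem_closedBall_zero_iff, norm_smul_of_nonneg (inv_nonneg.2 (norm_nonneg v)),
      inv_mul_cancel₀ (norm_ne_zero_iff.2 hv)]
  obtain ⟨z, hz, hdist⟩ := Metric.mem_closure_iff.1 hu ε hε
  rw [convexHull_eq_union_convexHull_finite_subsets, mem_iUnion₂] at hz
  obtain ⟨s, hs, hz⟩ := hz
  obtain ⟨w, hw₀, hw₁, rfl⟩ := Finset.mem_convexHull'.1 hz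
  refine ⟨s, fun x => ‖v‖ * w x, fun x hx => mul_nonneg (norm_nonneg v) (hw₀ x hx),
    fun x hx => hs hx, by rw [← Finset.mul_sum, hw₁, mul_one], ?_⟩
  have : v - ∑ x ∈ s, (‖v‖ * w x) • x = ‖v‖ • (‖v‖⁻¹ • v - ∑ x ∈ s, w x • x) := by
    simp only [smul_sub, smul_inv_smul₀ (norm_ne_zero_iff.2 hv), Finset.smul_sum, smul_smul]
  rw [this, norm_smul_of_nonneg (norm_nonneg v), ← dist_eq_norm, mul_comm]
  gcongr

theorem mem_closure_isLinearBetween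
    (hV : closedBall (0 : V) 1 = closure (convexHull ℝ ((closedBall (0 : V) 1).extremePoints ℝ)))
    (hself : ∀ p ∈ A, ∀ t ∈ Icc (0 : ℝ) 1, σ p p t = p)
    (hcon : ∀ p ∈ A, ∀ q ∈ A, ∀ p' ∈ A, ∀ q' ∈ A, ∀ t ∈ Icc (0 : ℝ) 1,
      ‖σ p q t - σ p' q' t‖ ≤ (1 - t) * ‖p - p'‖ + t * ‖q - q'‖)
    {p₀ p q : V} {r : ℝ} (hball : closedBall p₀ (2 * r) ⊆ A) (hp : p ∈ closedBall p₀ r)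
    (hq : q ∈ closedBall p₀ r) : q ∈ closure {q' ∈ A | IsLinearBetween σ p q'} := by
  rw [Metric.mem_closure_iff]
  intro δ hδ
  set d := dist q p
  have hd : d ≤ 2 * r := by
    rw [mem_closedBall] at hp hq; linarith [dist_triangle_right q p p₀]
  obtain ⟨ε, hε, hεδ⟩ := exists_pos_mul_lt hδ (2 * d)
  -- Aim at `p + θ • (q - p)` instead of `q`: the shortfall `(1 - θ) d = ε θ d` absorbs the
  -- approximation error, which keeps all partial sums within `2r` of `p₀`.
  set θ := (1 + ε)⁻¹
  have hθ : θ ∈ Icc (0 : ℝ) 1 := ⟨by positivity, inv_le_one_of_one_le₀ (by linarith)⟩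
  have hεθ : ε * θ = 1 - θ := by
    have : (1 + ε) * θ = 1 := mul_inv_cancel₀ (by positivity)
    linarith
  have hθd : θ * d + ε * (θ * d) = d := by rw [← mul_assoc, hεθ]; ring
  have hm : p + θ • (q - p) ∈ closedBall p₀ r := (convex_closedBall p₀ r).add_smul_sub_mem hp hq hθ
  have hv : ‖θ • (q - p)‖ = θ * d := by rw [norm_smul_of_nonneg hθ.1, ← dist_eq_norm]
  obtain ⟨s, c, hc, he, hcs, happrox⟩ := exists_sum_smul_extremePoints_near hV (θ • (q - p)) hε
  rw [hv] at hcs happrox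
  have hq'm : dist (p + ∑ x ∈ s, c x • x) (p + θ • (q - p)) ≤ ε * (θ * d) := by
    rwa [dist_add_left, dist_eq_norm, norm_sub_rev]
  have hA : ∀ s' ⊆ s, p + ∑ x ∈ s', c x • x ∈ A := fun s' hs' => by
    apply hball
    have := two_mul_dist_add_sum_le hs' hc (fun x hx => mem_closedBall_zero_iff.1 (he x hx).1) p p₀
    rw [mem_closedBall] at hp hm ⊢
    linarith [dist_triangle (p + ∑ x ∈ s, c x • x) (p + θ • (q - p)) p₀]
  have hqm : dist q (p + θ • (q - p)) = ε * (θ * d) := by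
    rw [← mul_assoc, hεθ, dist_eq_norm, show q - (p + θ • (q - p)) = (1 - θ) • (q - p) by module,
      norm_smul_of_nonneg (sub_nonneg.2 hθ.2), ← dist_eq_norm]
  refine ⟨_, ⟨hA s subset_rfl, isLinearBetween_add_sum hself hcon s hc he p hA⟩, ?_⟩
  calc dist q (p + ∑ x ∈ s, c x • x)
      ≤ dist q (p + θ • (q - p)) + dist (p + ∑ x ∈ s, c x • x) (p + θ • (q - p)) :=
        dist_triangle_right _ _ _
    _ ≤ 2 * (ε * (θ * d)) := by rw [hqm]; linarith
    _ ≤ 2 * (ε * (1 * d)) := by gcongr; exact hθ.2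
    _ < δ := by linarith

end

theorem bicombing_linear_on_ball_general
    {V : Type*} [NormedAddCommGroup V] [NormedSpace ℝ V]
    (hV : Metric.closedBall (0:V) 1 =
      closure (convexHull ℝ (Set.extremePoints ℝ (Metric.closedBall (0:V) 1))))
    (A : Set V) (σ : V → V → ℝ → V)
    (h0 : ∀ p ∈ A, ∀ q ∈ A, σ p q 0 = p)
    (hgeo : ∀ p ∈ A, ∀ q ∈ A, ∀ s ∈ Set.Icc (0:ℝ) 1, ∀ t ∈ Set.Icc (0:ℝ) 1,
      ‖σ p q s - σ p q t‖ = |s - t| * ‖p - q‖)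
    (hcon : ∀ p ∈ A, ∀ q ∈ A, ∀ p' ∈ A, ∀ q' ∈ A, ∀ t ∈ Set.Icc (0:ℝ) 1,
      ‖σ p q t - σ p' q' t‖ ≤ (1 - t) * ‖p - p'‖ + t * ‖q - q'‖)
    (p₀ : V) (r : ℝ)
    (hball : Metric.closedBall p₀ (2*r) ⊆ A) :
    ∀ p ∈ Metric.closedBall p₀ r, ∀ q ∈ Metric.closedBall p₀ r,
      ∀ t ∈ Set.Icc (0:ℝ) 1, σ p q t = (1 - t) • p + t • q := by
  intro p hp q hq
  have hself : ∀ p ∈ A, ∀ t ∈ Icc (0 : ℝ) 1, σ p p t = p := fun p hp t ht => by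
    have := hgeo p hp p hp t ht 0 ⟨le_rfl, zero_le_one⟩
    rwa [sub_self, norm_zero, mul_zero, norm_eq_zero, sub_eq_zero, h0 p hp p hp] at this
  have hr : 0 ≤ r := dist_nonneg.trans hp
  have hsub : closedBall p₀ r ⊆ A := (closedBall_subset_closedBall (by linarith)).trans hball
  exact isLinearBetween_of_mem_closure hcon (hsub hp) (hsub hq)
    (mem_closure_isLinearBetween hV hself hcon hball hp hq)

/-- Theorem 1.3: in a normed space whose closed unit ball is the closed convex
hull of its extreme points, any conical geodesic bicombing on a set `A`
containing `B(p₀,2r)` is linear on `B(p₀,r)`. -/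
theorem bicombing_linear_on_ball
    {V : Type*} [NormedAddCommGroup V] [NormedSpace ℝ V]
    (hV : Metric.closedBall (0:V) 1 =
      closure (convexHull ℝ (Set.extremePoints ℝ (Metric.closedBall (0:V) 1))))
    (A : Set V) (σ : V → V → ℝ → V)
    (hmem : ∀ p ∈ A, ∀ q ∈ A, ∀ t ∈ Set.Icc (0:ℝ) 1, σ p q t ∈ A)
    (h0 : ∀ p ∈ A, ∀ q ∈ A, σ p q 0 = p)
    (h1 : ∀ p ∈ A, ∀ q ∈ A, σ p q 1 = q)
    (hgeo : ∀ p ∈ A, ∀ q ∈ A, ∀ s ∈ Set.Icc (0:ℝ) 1, ∀ t ∈ Set.Icc (0:ℝ) 1,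
      ‖σ p q s - σ p q t‖ = |s - t| * ‖p - q‖)
    (hcon : ∀ p ∈ A, ∀ q ∈ A, ∀ p' ∈ A, ∀ q' ∈ A, ∀ t ∈ Set.Icc (0:ℝ) 1,
      ‖σ p q t - σ p' q' t‖ ≤ (1 - t) * ‖p - p'‖ + t * ‖q - q'‖)
    (p₀ : V) (hp₀ : p₀ ∈ A) (r : ℝ) (hr : 0 ≤ r)
    (hball : Metric.closedBall p₀ (2*r) ⊆ A) :
    ∀ p ∈ Metric.closedBall p₀ r, ∀ q ∈ Metric.closedBall p₀ r,
      ∀ t ∈ Set.Icc (0:ℝ) 1, σ p q t = (1 - t) • p + t • q :=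
  bicombing_linear_on_ball_general hV A σ h0 hgeo hcon p₀ r hball
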